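/- arXiv:2505.17000 — 2 statements merged into one kernel-verified Lean document; each statement's English description precedes it below -/
import Mathlib

section
/- Fix an integer d ≥ 2, an index 0 ≤ i ≤ d, a threshold u ∈ ℝ, and κ as below with κ'(1) > 1. Set ξ_∞ := κ'(1)(κ'(1)−1)/κ''(1). Then, as L → ∞, κ'(1)^{−Ld/2}·N_i(L,u) converges to (2√π / Γ((d+1)/2)) · (η_1(κ'(1)−1))^{−d/2} · ∫_u^∞ φ(x) (∫_{ℝ^d} Π(λ_{ξ_∞,x})·𝟙_{O_i}(λ_{ξ_∞,x})·f_{(1+η_1(1−κ'(1)))/2}(λ) dλ) dx. (High-disorder regime of Theorem 3.3.) -/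
/-!
Write `m = κ'(1) > 1`. By the chain rule `κ_L'(1) = m^L` and
`κ_L''(1) = κ''(1) m^L (m^L - 1) / (m (m - 1))`, so `η_L = ξ_∞ / (m^L - 1)` and
`ξ_L = m^L η_L = ξ_∞ + η_L`. Hence the GOI parameter `(1 + η_L - ξ_L)/2 = (1 - ξ_∞)/2` does not
depend on `L`, and `m^{-Ld/2} η_L^{-d/2} = ξ_L^{-d/2}` with `ξ_L → ξ_∞`. It remains to show that
`ξ ↦ ξ^{-d/2} ∫_u^∞ φ(x) (∫ Π(λ_{ξ,x}) 𝟙_{O_i}(λ_{ξ,x}) f_c(λ) dλ) dx` is continuous at `ξ_∞`;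
since `c = (1 - ξ_∞)/2 ≥ 0` by `κ''(1) ≥ κ'(1)(κ'(1) - 1)`, the integrand is dominated by a
polynomial times a Gaussian, locally uniformly in the shift, and dominated convergence applies to
both integrals. The indicator of `O_i` is continuous in the shift off the null set where some
`λ_j` equals it.
-/

open MeasureTheory Filter Real

/-- `K_d := 2^{d/2} ∏_{j=1}^d Γ(j/2)`. -/
noncomputable def Kd (d : ℕ) : ℝ :=
  2 ^ ((d : ℝ) / 2) * ∏ j ∈ Finset.Icc 1 d, Real.Gamma ((j : ℝ) / 2)

/-- `Π(λ) := ∏_{j=1}^d |λ_j|`. -/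
noncomputable def PiAbs (d : ℕ) (lam : Fin d → ℝ) : ℝ := ∏ j, |lam j|

/-- `Δ(λ) := ∏_{1 ≤ h < k ≤ d} |λ_h − λ_k|`. -/
noncomputable def DeltaV (d : ℕ) (lam : Fin d → ℝ) : ℝ :=
  ∏ h : Fin d, ∏ k : Fin d, if h < k then |lam h - lam k| else 1

/-- The density of the ordered eigenvalues of a GOI(c) matrix. -/
noncomputable def fGOI (d : ℕ) (c : ℝ) (lam : Fin d → ℝ) : ℝ :=
  (Kd d * Real.sqrt (1 + d * c))⁻¹ * DeltaV d lam *
    Real.exp (-(∑ j, lam j ^ 2) / 2 + c * (∑ j, lam j) ^ 2 / (2 * (1 + d * c))) *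
    Set.indicator {x : Fin d → ℝ | Monotone x} (fun _ => 1) lam

/-- `O_i := {λ : λ_i < 0 < λ_{i+1}}` with conventions `λ_0 = −∞`, `λ_{d+1} = +∞`
(one-based indexing; coordinates here are zero-based). -/
def Oi (d i : ℕ) : Set (Fin d → ℝ) :=
  {lam | (∀ j : Fin d, (j : ℕ) + 1 = i → lam j < 0) ∧ (∀ j : Fin d, (j : ℕ) = i → 0 < lam j)}

/-- `∫_{ℝ^d} Π(λ)·𝟙_{O_i}(λ)·f_c(λ) dλ`. -/
noncomputable def GOIint (d i : ℕ) (c : ℝ) : ℝ :=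
  ∫ lam : Fin d → ℝ,
    PiAbs d lam * Set.indicator (Oi d i) (fun _ => 1) lam * fGOI d c lam

/-- `η_L := κ_L'(1)/κ_L''(1)` where `κ_L` is the `L`-fold iterate of `κ`. -/
noncomputable def etaL (κ : ℝ → ℝ) (L : ℕ) : ℝ :=
  deriv (κ^[L]) 1 / deriv (deriv (κ^[L])) 1

/-- The Kac–Rice expression for the expected number of critical points of index `i`
of the depth-`L` limiting field on `S^d`. -/
noncomputable def Mcrit (d i : ℕ) (κ : ℝ → ℝ) (L : ℕ) : ℝ :=
  2 * Real.sqrt π / Real.Gamma (((d : ℝ) + 1) / 2) * etaL κ L ^ (-(d : ℝ) / 2) *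
    GOIint d i ((1 + etaL κ L) / 2)

/-- `ξ_L := κ_L'(1)²/κ_L''(1)`. -/
noncomputable def xiL (κ : ℝ → ℝ) (L : ℕ) : ℝ :=
  deriv (κ^[L]) 1 ^ 2 / deriv (deriv (κ^[L])) 1

/-- The standard Gaussian density. -/
noncomputable def stdPhi (x : ℝ) : ℝ := Real.exp (-x ^ 2 / 2) / Real.sqrt (2 * π)

/-- The standard Gaussian cumulative distribution function. -/
noncomputable def stdCDF (u : ℝ) : ℝ := ∫ x in Set.Iic u, stdPhi x

/-- `∫_u^∞ φ(x)·(∫_{ℝ^d} Π(λ_{ξ,x})·𝟙_{O_i}(λ_{ξ,x})·f_c(λ) dλ) dx`, where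
`λ_{ξ,x}` has components `λ_j − ξ·x/√2`. -/
noncomputable def GOIintShift (d i : ℕ) (c ξ u : ℝ) : ℝ :=
  ∫ x in Set.Ioi u, stdPhi x *
    ∫ lam : Fin d → ℝ,
      PiAbs d (fun j => lam j - ξ * x / Real.sqrt 2) *
        Set.indicator (Oi d i) (fun _ => 1) (fun j => lam j - ξ * x / Real.sqrt 2) *
        fGOI d c lam

/-- The Kac–Rice expression for the expected number of critical points of index `i`
above level `u` of the depth-`L` limiting field on `S^d`. -/
noncomputable def Ncrit (d i : ℕ) (κ : ℝ → ℝ) (u : ℝ) (L : ℕ) : ℝ :=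
  2 * Real.sqrt π / Real.Gamma (((d : ℝ) + 1) / 2) * etaL κ L ^ (-(d : ℝ) / 2) *
    GOIintShift d i ((1 + etaL κ L - xiL κ L) / 2) (xiL κ L) u

open Topology

lemma integrable_one_add_abs_pow_mul_exp_neg_mul_sq (n : ℕ) {b : ℝ} (hb : 0 < b) :
    Integrable fun t : ℝ => (1 + |t|) ^ n * exp (-b * t ^ 2) := by
  have hmoment (k : ℕ) : Integrable fun t : ℝ => |t| ^ k * exp (-b * t ^ 2) := by
    simpa [abs_mul, abs_pow] using
      (integrable_rpow_mul_exp_neg_mul_sq hb (s := k) (by linarith [k.cast_nonneg (α := ℝ)])).abs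
  simp_rw [add_comm (1 : ℝ), add_pow, one_pow, mul_one, Finset.sum_mul]
  exact integrable_finsetSum _ fun k _ => by
    simpa [mul_left_comm, mul_assoc] using (hmoment k).const_mul (n.choose k : ℝ)

section GaussianEnvelope

variable {ι : Type*} [Fintype ι]

noncomputable def gaussianEnvelope (n : ℕ) (b : ℝ) (lam : ι → ℝ) : ℝ :=
  ∏ j, (1 + |lam j|) ^ n * exp (-b * lam j ^ 2)

lemma gaussianEnvelope_nonneg (n : ℕ) (b : ℝ) (lam : ι → ℝ) : 0 ≤ gaussianEnvelope n b lam :=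
  Finset.prod_nonneg fun _ _ => by positivity

lemma gaussianEnvelope_eq (n : ℕ) (b : ℝ) (lam : ι → ℝ) :
    gaussianEnvelope n b lam = (∏ j, (1 + |lam j|)) ^ n * exp (-b * ∑ j, lam j ^ 2) := by
  rw [gaussianEnvelope, Finset.prod_mul_distrib, Finset.prod_pow, ← exp_sum, Finset.mul_sum]

lemma integrable_gaussianEnvelope (n : ℕ) {b : ℝ} (hb : 0 < b) :
    Integrable (gaussianEnvelope (ι := ι) n b) :=
  Integrable.fintype_prod fun _ => integrable_one_add_abs_pow_mul_exp_neg_mul_sq n hb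

end GaussianEnvelope

lemma indicator_one_nonneg {α : Type*} (s : Set α) (x : α) :
    0 ≤ s.indicator (fun _ => (1 : ℝ)) x :=
  Set.indicator_nonneg (fun _ _ => zero_le_one) x

lemma indicator_one_le_one {α : Type*} (s : Set α) (x : α) :
    s.indicator (fun _ => (1 : ℝ)) x ≤ 1 :=
  Set.indicator_le_self' (fun _ _ => zero_le_one) x

section Bounds

variable {d : ℕ}

lemma Kd_pos (d : ℕ) : 0 < Kd d :=
  mul_pos (rpow_pos_of_pos two_pos _) <| Finset.prod_pos fun _ hj =>
    Gamma_pos_of_pos <| div_pos (Nat.cast_pos.2 (Finset.mem_Icc.1 hj).1) two_pos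

lemma PiAbs_nonneg (lam : Fin d → ℝ) : 0 ≤ PiAbs d lam :=
  Finset.prod_nonneg fun _ _ => abs_nonneg _

lemma DeltaV_nonneg (lam : Fin d → ℝ) : 0 ≤ DeltaV d lam :=
  Finset.prod_nonneg fun _ _ => Finset.prod_nonneg fun _ _ => by split_ifs <;> positivity


lemma fGOI_nonneg (c : ℝ) (lam : Fin d → ℝ) : 0 ≤ fGOI d c lam := by
  have := Kd_pos d
  have := DeltaV_nonneg lam
  have := indicator_one_nonneg {x : Fin d → ℝ | Monotone x} lam
  unfold fGOI
  positivity

lemma PiAbs_sub_const_le (s : ℝ) (lam : Fin d → ℝ) :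
    PiAbs d (fun j => lam j - s) ≤ (1 + |s|) ^ d * ∏ j, (1 + |lam j|) := by
  rw [← Fin.prod_const, ← Finset.prod_mul_distrib]
  refine Finset.prod_le_prod (fun _ _ => abs_nonneg _) fun j _ => ?_
  nlinarith [abs_sub (lam j) s, abs_nonneg (lam j), abs_nonneg s]

lemma DeltaV_le (lam : Fin d → ℝ) : DeltaV d lam ≤ (∏ j, (1 + |lam j|)) ^ (2 * d) := by
  calc DeltaV d lam ≤ ∏ h : Fin d, ∏ k : Fin d, (1 + |lam h|) * (1 + |lam k|) := by
        refine Finset.prod_le_prod (fun _ _ => Finset.prod_nonneg fun _ _ => ?_)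
          fun h _ => Finset.prod_le_prod (fun _ _ => ?_) fun k _ => ?_
        · split_ifs <;> positivity
        · split_ifs <;> positivity
        · split_ifs
          · nlinarith [abs_sub (lam h) (lam k), abs_nonneg (lam h), abs_nonneg (lam k)]
          · nlinarith [abs_nonneg (lam h), abs_nonneg (lam k)]
    _ = (∏ j, (1 + |lam j|)) ^ (2 * d) := by
        simp_rw [Finset.prod_mul_distrib, Finset.prod_const, Finset.card_univ, Fintype.card_fin,
          Finset.prod_pow, two_mul, pow_add]

lemma fGOI_exponent_le {c : ℝ} (hc : 0 ≤ c) (lam : Fin d → ℝ) :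
    -(∑ j, lam j ^ 2) / 2 + c * (∑ j, lam j) ^ 2 / (2 * (1 + d * c))
      ≤ -(2 * (1 + d * c))⁻¹ * ∑ j, lam j ^ 2 := by
  have hcs : (∑ j, lam j) ^ 2 ≤ d * ∑ j, lam j ^ 2 := by
    simpa using sq_sum_le_card_mul_sum_sq (s := Finset.univ) (f := lam)
  have hT : 0 < 2 * (1 + d * c) := by positivity
  rw [← sub_nonneg]
  have key : -(2 * (1 + d * c))⁻¹ * ∑ j, lam j ^ 2
      - (-(∑ j, lam j ^ 2) / 2 + c * (∑ j, lam j) ^ 2 / (2 * (1 + d * c)))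
      = c * (d * ∑ j, lam j ^ 2 - (∑ j, lam j) ^ 2) / (2 * (1 + d * c)) := by
    field_simp
    ring
  rw [key]
  exact div_nonneg (mul_nonneg hc (sub_nonneg.2 hcs)) hT.le

lemma fGOI_le {c : ℝ} (hc : 0 ≤ c) (lam : Fin d → ℝ) :
    fGOI d c lam ≤ (Kd d)⁻¹ * gaussianEnvelope (2 * d) (2 * (1 + d * c))⁻¹ lam := by
  have hK := Kd_pos d
  have hnorm : (Kd d * √(1 + d * c))⁻¹ ≤ (Kd d)⁻¹ :=
    inv_anti₀ hK <| le_mul_of_one_le_right hK.le <|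
      one_le_sqrt.2 (le_add_of_nonneg_right (by positivity))
  have := DeltaV_nonneg lam
  have := indicator_one_nonneg {x : Fin d → ℝ | Monotone x} lam
  have := indicator_one_le_one {x : Fin d → ℝ | Monotone x} lam
  rw [gaussianEnvelope_eq]
  unfold fGOI
  calc _ ≤ (Kd d)⁻¹ * (∏ j, (1 + |lam j|)) ^ (2 * d) *
        exp (-(2 * (1 + d * c))⁻¹ * ∑ j, lam j ^ 2) * 1 := by
        gcongr
        exacts [DeltaV_le lam, fGOI_exponent_le hc lam]
    _ = _ := by ring

end Bounds

section ShiftedIntegral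

variable {d i : ℕ}

lemma isOpen_Oi (d i : ℕ) : IsOpen (Oi d i) := by
  simp only [Oi, Set.ofPred_and, Set.ofPred_forall]
  exact (isOpen_iInter_of_finite fun j => isOpen_iInter_of_finite fun _ =>
      isOpen_lt (continuous_apply j) continuous_const).inter
    (isOpen_iInter_of_finite fun j => isOpen_iInter_of_finite fun _ =>
      isOpen_lt continuous_const (continuous_apply j))

lemma frontier_Oi_subset (d i : ℕ) : frontier (Oi d i) ⊆ {v | ∃ j, v j = 0} := by
  have hclosure : closure (Oi d i) ⊆
      {v | (∀ j : Fin d, (j : ℕ) + 1 = i → v j ≤ 0) ∧ ∀ j : Fin d, (j : ℕ) = i → 0 ≤ v j} := by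
    refine closure_minimal
      (fun v hv => ⟨fun j hj => (hv.1 j hj).le, fun j hj => (hv.2 j hj).le⟩) ?_
    simp only [Set.ofPred_and, Set.ofPred_forall]
    exact (isClosed_iInter fun j => isClosed_iInter fun _ =>
        isClosed_le (continuous_apply j) continuous_const).inter
      (isClosed_iInter fun j => isClosed_iInter fun _ =>
        isClosed_le continuous_const (continuous_apply j))
  rintro v ⟨hv, hv'⟩
  rw [(isOpen_Oi d i).interior_eq] at hv'
  obtain ⟨hle, hge⟩ := hclosure hv
  rw [Set.mem_ofPred_eq]
  by_contra! hne
  exact hv' ⟨fun j hj => (hle j hj).lt_of_ne (hne j),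
    fun j hj => (hge j hj).lt_of_ne' (hne j)⟩

lemma measurable_fGOI (d : ℕ) (c : ℝ) : Measurable (fGOI d c) := by
  have hDelta : Continuous (DeltaV d) :=
    continuous_finsetProd _ fun h _ => continuous_finsetProd _ fun k _ => by
      split_ifs
      exacts [((continuous_apply h).sub (continuous_apply k)).abs, continuous_const]
  unfold fGOI
  exact (((continuous_const.mul hDelta).mul (by fun_prop)).measurable).mul
    (measurable_const.indicator isClosed_monotone.measurableSet)

noncomputable def shiftedGOIIntegrand (d i : ℕ) (c s : ℝ) (lam : Fin d → ℝ) : ℝ :=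
  PiAbs d (fun j => lam j - s) * Set.indicator (Oi d i) (fun _ => 1) (fun j => lam j - s) *
    fGOI d c lam

noncomputable def shiftedGOIint (d i : ℕ) (c s : ℝ) : ℝ :=
  ∫ lam, shiftedGOIIntegrand d i c s lam

lemma GOIintShift_eq (d i : ℕ) (c ξ u : ℝ) :
    GOIintShift d i c ξ u = ∫ x in Set.Ioi u, stdPhi x * shiftedGOIint d i c (ξ * x / √2) :=
  rfl

lemma shiftedGOIIntegrand_nonneg (c s : ℝ) (lam : Fin d → ℝ) :
    0 ≤ shiftedGOIIntegrand d i c s lam :=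
  mul_nonneg (mul_nonneg (PiAbs_nonneg _) (indicator_one_nonneg _ _)) (fGOI_nonneg c lam)

lemma shiftedGOIIntegrand_le {c : ℝ} (hc : 0 ≤ c) (s : ℝ) (lam : Fin d → ℝ) :
    shiftedGOIIntegrand d i c s lam
      ≤ (Kd d)⁻¹ * (1 + |s|) ^ d * gaussianEnvelope (2 * d + 1) (2 * (1 + d * c))⁻¹ lam := by
  have := indicator_one_nonneg (Oi d i) (fun j => lam j - s)
  have := indicator_one_le_one (Oi d i) (fun j => lam j - s)
  have := fGOI_nonneg c lam
  have := Kd_pos d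
  have hprod : 0 ≤ ∏ j, (1 + |lam j|) := Finset.prod_nonneg fun _ _ => by positivity
  calc shiftedGOIIntegrand d i c s lam
      ≤ (1 + |s|) ^ d * (∏ j, (1 + |lam j|)) * 1 *
          ((Kd d)⁻¹ * gaussianEnvelope (2 * d) (2 * (1 + d * c))⁻¹ lam) := by
        unfold shiftedGOIIntegrand
        gcongr
        exacts [PiAbs_sub_const_le s lam, fGOI_le hc lam]
    _ = _ := by
        rw [gaussianEnvelope_eq, gaussianEnvelope_eq]
        ring

lemma continuousAt_shiftedGOIIntegrand (c : ℝ) {s₀ : ℝ} {lam : Fin d → ℝ}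
    (hlam : ∀ j, lam j ≠ s₀) :
    ContinuousAt (fun s => shiftedGOIIntegrand d i c s lam) s₀ := by
  have hshift : Continuous fun s : ℝ => fun j => lam j - s := by fun_prop
  have hind : ContinuousAt (Set.indicator (Oi d i) fun _ => (1 : ℝ)) fun j => lam j - s₀ :=
    continuousOn_const.continuousAt_indicator fun hv => by
      obtain ⟨j, hj⟩ := frontier_Oi_subset d i hv
      exact hlam j (sub_eq_zero.1 hj)
  unfold shiftedGOIIntegrand
  exact (((continuous_finsetProd _ fun j _ => (continuous_apply j).abs).comp
    hshift).continuousAt.mul (hind.comp hshift.continuousAt)).mul continuousAt_const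

lemma continuous_shiftedGOIint {c : ℝ} (hc : 0 ≤ c) : Continuous (shiftedGOIint d i c) := by
  refine continuous_iff_continuousAt.2 fun s₀ => continuousAt_of_dominated
    (bound := fun lam => (Kd d)⁻¹ * (2 + |s₀|) ^ d *
      gaussianEnvelope (2 * d + 1) (2 * (1 + d * c))⁻¹ lam) ?_ ?_ ?_ ?_
  · refine Eventually.of_forall fun s => Measurable.aestronglyMeasurable ?_
    have hshift : Measurable fun lam : Fin d → ℝ => fun j => lam j - s := by fun_prop
    exact ((continuous_finsetProd _ fun j _ => (continuous_apply j).abs).measurable.comp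
      hshift |>.mul ((measurable_const.indicator (isOpen_Oi d i).measurableSet).comp
      hshift)).mul (measurable_fGOI d c)
  · filter_upwards [(continuous_abs.tendsto s₀).eventually (gt_mem_nhds (lt_add_one |s₀|))]
      with s hs
    refine ae_of_all _ fun lam => ?_
    rw [Real.norm_eq_abs, abs_of_nonneg (shiftedGOIIntegrand_nonneg c s lam)]
    refine (shiftedGOIIntegrand_le hc s lam).trans ?_
    have := gaussianEnvelope_nonneg (2 * d + 1) (2 * (1 + d * c))⁻¹ lam
    have := Kd_pos d
    gcongr (Kd d)⁻¹ * ?_ ^ d * _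
    linarith
  · exact (integrable_gaussianEnvelope _ (by positivity)).const_mul _
  · filter_upwards [ae_all_iff.2 fun j => Measure.ae_eval_ne (μ := fun _ => volume) j s₀]
      with lam hlam
    exact continuousAt_shiftedGOIIntegrand c hlam

lemma abs_shiftedGOIint_le {c : ℝ} (hc : 0 ≤ c) (s : ℝ) :
    |shiftedGOIint d i c s| ≤
      (Kd d)⁻¹ * (∫ lam : Fin d → ℝ, gaussianEnvelope (2 * d + 1) (2 * (1 + d * c))⁻¹ lam) *
        (1 + |s|) ^ d := by
  have h := norm_integral_le_of_norm_le
    ((integrable_gaussianEnvelope (ι := Fin d) (2 * d + 1) (b := (2 * (1 + d * c))⁻¹)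
      (by positivity)).const_mul ((Kd d)⁻¹ * (1 + |s|) ^ d))
    (ae_of_all _ fun lam => by
      rw [Real.norm_eq_abs, abs_of_nonneg (shiftedGOIIntegrand_nonneg (i := i) c s lam)]
      exact shiftedGOIIntegrand_le hc s lam)
  rw [integral_const_mul] at h
  rw [← Real.norm_eq_abs, shiftedGOIint]
  linarith

lemma continuous_GOIintShift {c : ℝ} (hc : 0 ≤ c) (u : ℝ) :
    Continuous fun ξ => GOIintShift d i c ξ u := by
  set A := (Kd d)⁻¹ * ∫ lam : Fin d → ℝ, gaussianEnvelope (2 * d + 1) (2 * (1 + d * c))⁻¹ lam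
  have hA : 0 ≤ A := mul_nonneg (inv_nonneg.2 (Kd_pos d).le)
    (integral_nonneg (gaussianEnvelope_nonneg _ _))
  have hφ (x : ℝ) : 0 ≤ stdPhi x := by unfold stdPhi; positivity
  simp only [GOIintShift_eq]
  refine continuous_iff_continuousAt.2 fun ξ₀ => continuousAt_of_dominated
    (bound := fun x => stdPhi x * (A * (2 + |ξ₀|) ^ d * (1 + |x|) ^ d)) ?_ ?_ ?_ ?_
  · exact Eventually.of_forall fun ξ => ((by unfold stdPhi; fun_prop : Continuous stdPhi).mul
      ((continuous_shiftedGOIint hc).comp (by fun_prop))).aestronglyMeasurable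
  · filter_upwards [(continuous_abs.tendsto ξ₀).eventually (gt_mem_nhds (lt_add_one |ξ₀|))]
      with ξ hξ
    refine ae_of_all _ fun x => ?_
    have hscale : 1 + |ξ * x / √2| ≤ (2 + |ξ₀|) * (1 + |x|) := by
      have : |ξ * x / √2| ≤ |ξ| * |x| := by
        rw [abs_div, abs_mul]
        exact div_le_self (by positivity) (one_le_sqrt.2 one_le_two |>.trans (le_abs_self _))
      nlinarith [abs_nonneg x, abs_nonneg ξ₀, mul_le_mul_of_nonneg_right hξ.le (abs_nonneg x)]
    rw [norm_mul, Real.norm_eq_abs, abs_of_nonneg (hφ x), Real.norm_eq_abs]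
    refine mul_le_mul_of_nonneg_left ?_ (hφ x)
    calc |shiftedGOIint d i c (ξ * x / √2)| ≤ A * (1 + |ξ * x / √2|) ^ d :=
          abs_shiftedGOIint_le hc _
      _ ≤ A * ((2 + |ξ₀|) * (1 + |x|)) ^ d := by gcongr
      _ = A * (2 + |ξ₀|) ^ d * (1 + |x|) ^ d := by rw [mul_pow, ← mul_assoc]
  · have h := (integrable_one_add_abs_pow_mul_exp_neg_mul_sq d one_half_pos).const_mul
      ((√(2 * π))⁻¹ * (A * (2 + |ξ₀|) ^ d))
    refine (h.congr (ae_of_all _ fun x => ?_)).restrict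
    simp only [stdPhi]
    ring_nf
  · exact ae_of_all _ fun x => (continuous_const.mul
      ((continuous_shiftedGOIint hc).comp (by fun_prop))).continuousAt

end ShiftedIntegral

section Iterate

variable {κ : ℝ → ℝ} {a : ℝ}

lemma deriv_iterate_of_isFixedPt (hκ : DifferentiableAt ℝ κ a) (ha : κ a = a) (n : ℕ) :
    deriv κ^[n] a = deriv κ a ^ n :=
  (HasDerivAt.iterate a hκ.hasDerivAt ha n).deriv

lemma contDiff_iterate {n : WithTop ℕ∞} (hκ : ContDiff ℝ n κ) (L : ℕ) : ContDiff ℝ n κ^[L] := by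
  induction L with
  | zero => exact contDiff_id
  | succ L ih => rw [Function.iterate_succ']; exact hκ.comp ih

-- `κ_n''(a) = κ''(a) κ'(a)^(n-1) (κ'(a)^n - 1) / (κ'(a) - 1)`, cleared of denominators so that it
-- holds for every value of `κ'(a)`.
lemma deriv_deriv_iterate_mul (hκ : ContDiff ℝ 2 κ) (ha : κ a = a) (n : ℕ) :
    deriv (deriv κ^[n]) a * (deriv κ a * (deriv κ a - 1))
      = deriv (deriv κ) a * (deriv κ a ^ (2 * n) - deriv κ a ^ n) := by
  have hκ₁ := hκ.differentiable two_ne_zero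
  induction n with
  | zero => simp
  | succ n ih =>
    have hg := contDiff_iterate hκ n
    have hchain : deriv κ^[n + 1] = fun x => (deriv κ ∘ κ^[n]) x * deriv κ^[n] x := by
      rw [Function.iterate_succ']
      exact funext fun x => deriv_comp x (hκ₁ _) (hg.differentiable two_ne_zero x)
    rw [hchain, deriv_fun_mul ((hκ.differentiable_deriv_two _).comp a
        (hg.differentiable two_ne_zero a)) (hg.differentiable_deriv_two a),
      deriv_comp a (hκ.differentiable_deriv_two _) (hg.differentiable two_ne_zero a),
      Function.comp_apply, Function.iterate_fixed ha, deriv_iterate_of_isFixedPt (hκ₁ a) ha]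
    linear_combination deriv κ a * ih

end Iterate

lemma xiL_eq_deriv_mul_etaL (κ : ℝ → ℝ) (L : ℕ) : xiL κ L = deriv κ^[L] 1 * etaL κ L := by
  rw [xiL, etaL, sq, mul_div_assoc]

noncomputable def xiInf (κ : ℝ → ℝ) : ℝ := deriv κ 1 * (deriv κ 1 - 1) / deriv (deriv κ) 1

section DepthParameters

variable {κ : ℝ → ℝ}

lemma etaL_eq_xiInf_div {L : ℕ} (hκ : ContDiff ℝ 2 κ) (hfix : κ 1 = 1) (hm : deriv κ 1 ≠ 0)
    (hmL : deriv κ 1 ^ L ≠ 1) (hw : deriv (deriv κ) 1 ≠ 0) :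
    etaL κ L = xiInf κ / (deriv κ 1 ^ L - 1) := by
  have hm1 : deriv κ 1 - 1 ≠ 0 := fun h => hmL (by rw [sub_eq_zero.1 h, one_pow])
  have hmL1 : deriv κ 1 ^ L - 1 ≠ 0 := sub_ne_zero.2 hmL
  have hs := deriv_deriv_iterate_mul hκ hfix L
  rw [etaL, xiInf, deriv_iterate_of_isFixedPt (hκ.differentiable two_ne_zero 1) hfix,
    eq_div_of_mul_eq (mul_ne_zero hm hm1) hs, two_mul, pow_add]
  field_simp

lemma etaL_eq_of_one_lt {L : ℕ} (hκ : ContDiff ℝ 2 κ) (hfix : κ 1 = 1) (hm : 1 < deriv κ 1)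
    (hw : deriv (deriv κ) 1 ≠ 0) (hL : L ≠ 0) :
    etaL κ L = xiInf κ / (deriv κ 1 ^ L - 1) :=
  etaL_eq_xiInf_div hκ hfix (one_pos.trans hm).ne' (one_lt_pow₀ hm hL).ne' hw

lemma xiL_eq_xiInf_add_etaL {L : ℕ} (hκ : ContDiff ℝ 2 κ) (hfix : κ 1 = 1) (hm : 1 < deriv κ 1)
    (hw : deriv (deriv κ) 1 ≠ 0) (hL : L ≠ 0) :
    xiL κ L = xiInf κ + etaL κ L := by
  have := (sub_pos.2 (one_lt_pow₀ hm hL)).ne'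
  rw [xiL_eq_deriv_mul_etaL, deriv_iterate_of_isFixedPt (hκ.differentiable two_ne_zero 1) hfix,
    etaL_eq_of_one_lt hκ hfix hm hw hL]
  field_simp
  ring

lemma tendsto_etaL_atTop (hκ : ContDiff ℝ 2 κ) (hfix : κ 1 = 1) (hm : 1 < deriv κ 1)
    (hw : deriv (deriv κ) 1 ≠ 0) : Tendsto (etaL κ) atTop (𝓝 0) := by
  have hpow := tendsto_atTop_add_const_right _ (-1) (tendsto_pow_atTop_atTop_of_one_lt hm)
  refine (mul_zero (xiInf κ) ▸ hpow.inv_tendsto_atTop.const_mul (xiInf κ)).congr' ?_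
  filter_upwards [eventually_ne_atTop 0] with L hL
  rw [etaL_eq_of_one_lt hκ hfix hm hw hL, Pi.inv_apply, div_eq_mul_inv, sub_eq_add_neg]

lemma tendsto_xiL_atTop (hκ : ContDiff ℝ 2 κ) (hfix : κ 1 = 1) (hm : 1 < deriv κ 1)
    (hw : deriv (deriv κ) 1 ≠ 0) : Tendsto (xiL κ) atTop (𝓝 (xiInf κ)) := by
  simpa using ((tendsto_etaL_atTop hκ hfix hm hw).const_add (xiInf κ)).congr' <|
    (eventually_ne_atTop 0).mono fun L hL => (xiL_eq_xiInf_add_etaL hκ hfix hm hw hL).symm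

lemma rescaled_Ncrit_eq (d i : ℕ) (u : ℝ) {L : ℕ} (hκ : ContDiff ℝ 2 κ) (hfix : κ 1 = 1)
    (hm : 1 < deriv κ 1) (hw : 0 < deriv (deriv κ) 1) (hL : L ≠ 0) :
    deriv κ 1 ^ (-((L : ℝ) * d) / 2) * Ncrit d i κ u L
      = 2 * √π / Gamma (((d : ℝ) + 1) / 2) * xiL κ L ^ (-(d : ℝ) / 2) *
        GOIintShift d i ((1 - xiInf κ) / 2) (xiL κ L) u := by
  have hm0 : 0 < deriv κ 1 := one_pos.trans hm
  have hη : 0 ≤ etaL κ L := by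
    rw [etaL_eq_of_one_lt hκ hfix hm hw.ne' hL]
    exact div_nonneg (div_nonneg (mul_nonneg hm0.le (sub_pos.2 hm).le) hw.le)
      (sub_pos.2 (one_lt_pow₀ hm hL)).le
  have hpre : deriv κ 1 ^ (-((L : ℝ) * d) / 2) * etaL κ L ^ (-(d : ℝ) / 2)
      = xiL κ L ^ (-(d : ℝ) / 2) := by
    rw [show -((L : ℝ) * d) / 2 = L * (-(d : ℝ) / 2) by ring, rpow_mul hm0.le, rpow_natCast,
      ← mul_rpow (by positivity) hη, xiL_eq_deriv_mul_etaL,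
      deriv_iterate_of_isFixedPt (hκ.differentiable two_ne_zero 1) hfix]
  have hc : (1 + etaL κ L - xiL κ L) / 2 = (1 - xiInf κ) / 2 := by
    rw [xiL_eq_xiInf_add_etaL hκ hfix hm hw.ne' hL]
    ring
  rw [Ncrit, hc, ← hpre]
  ring

end DepthParameters

theorem statement5_general (d i : ℕ) (u : ℝ) (κ : ℝ → ℝ)
    (hsmooth : ContDiff ℝ 2 κ) (hfix : κ 1 = 1)
    (hpos2 : 0 < deriv (deriv κ) 1)
    (hjensen : deriv κ 1 * (deriv κ 1 - 1) ≤ deriv (deriv κ) 1)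
    (hhigh : 1 < deriv κ 1) :
    Tendsto (fun L : ℕ => deriv κ 1 ^ (-((L : ℝ) * d) / 2) * Ncrit d i κ u L) atTop
      (nhds (2 * Real.sqrt π / Real.Gamma (((d : ℝ) + 1) / 2) *
        (deriv κ 1 / deriv (deriv κ) 1 * (deriv κ 1 - 1)) ^ (-(d : ℝ) / 2) *
        GOIintShift d i ((1 + deriv κ 1 / deriv (deriv κ) 1 * (1 - deriv κ 1)) / 2)
          (deriv κ 1 * (deriv κ 1 - 1) / deriv (deriv κ) 1) u)) := by
  have hξ : 0 < xiInf κ :=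
    div_pos (mul_pos (one_pos.trans hhigh) (sub_pos.2 hhigh)) hpos2
  have hξ₁ : xiInf κ ≤ 1 := (div_le_one hpos2).2 hjensen
  have hc : 0 ≤ (1 - xiInf κ) / 2 := by linarith
  have hG : ContinuousAt (fun ξ => 2 * √π / Gamma (((d : ℝ) + 1) / 2) * ξ ^ (-(d : ℝ) / 2) *
      GOIintShift d i ((1 - xiInf κ) / 2) ξ u) (xiInf κ) :=
    (continuousAt_const.mul (continuousAt_rpow_const _ _ (Or.inl hξ.ne'))).mul
      (continuous_GOIintShift hc u).continuousAt
  rw [show deriv κ 1 / deriv (deriv κ) 1 * (deriv κ 1 - 1) = xiInf κ by rw [xiInf]; ring,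
    show (1 + deriv κ 1 / deriv (deriv κ) 1 * (1 - deriv κ 1)) / 2 = (1 - xiInf κ) / 2 by
      rw [xiInf]; ring]
  refine (hG.tendsto.comp (tendsto_xiL_atTop hsmooth hfix hhigh hpos2.ne')).congr' ?_
  filter_upwards [eventually_ne_atTop 0] with L hL
  exact (rescaled_Ncrit_eq d i u hsmooth hfix hhigh hpos2 hL).symm

/-- High-disorder regime of Theorem 3.3: if `κ'(1) > 1`, with
`ξ_∞ := κ'(1)(κ'(1)−1)/κ''(1)`, then `κ'(1)^{−Ld/2}·N_i(L,u)` converges to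
`(2√π/Γ((d+1)/2))·(η_1(κ'(1)−1))^{−d/2}·∫_u^∞ φ(x)(∫ Π(λ_{ξ_∞,x})·𝟙_{O_i}(λ_{ξ_∞,x})·
f_{(1+η_1(1−κ'(1)))/2}(λ) dλ) dx`. -/
theorem statement5 (d i : ℕ) (hd : 2 ≤ d) (hi : i ≤ d) (u : ℝ) (κ : ℝ → ℝ)
    (hsmooth : ContDiff ℝ 2 κ) (hfix : κ 1 = 1)
    (hpos1 : 0 < deriv κ 1) (hpos2 : 0 < deriv (deriv κ) 1)
    (hjensen : deriv κ 1 * (deriv κ 1 - 1) ≤ deriv (deriv κ) 1)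
    (hhigh : 1 < deriv κ 1) :
    Tendsto (fun L : ℕ => deriv κ 1 ^ (-((L : ℝ) * d) / 2) * Ncrit d i κ u L) atTop
      (nhds (2 * Real.sqrt π / Real.Gamma (((d : ℝ) + 1) / 2) *
        (deriv κ 1 / deriv (deriv κ) 1 * (deriv κ 1 - 1)) ^ (-(d : ℝ) / 2) *
        GOIintShift d i ((1 + deriv κ 1 / deriv (deriv κ) 1 * (1 - deriv κ 1)) / 2)
          (deriv κ 1 * (deriv κ 1 - 1) / deriv (deriv κ) 1) u)) :=
  statement5_general d i u κ hsmooth hfix hpos2 hjensen hhigh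
end

section
/- Let κ : ℝ → ℝ be twice continuously differentiable with κ(1) = 1, κ'(1) > 0 and κ''(1) > 0; for L ≥ 1 let κ_L denote the L-fold iterate κ∘⋯∘κ and set ξ_L := κ_L'(1)²/κ_L''(1). Then: (i) if κ'(1) ≤ 1, then ξ_L → 0 as L → ∞; (ii) if κ'(1) > 1, then ξ_L → κ'(1)(κ'(1)−1)/κ''(1) as L → ∞. (Asymptotics of ξ_L in the proof of Theorem 3.3.) -/
open Filter Finset

/-!
With `a = κ'(1)` and `b = κ''(1)`, the fixed point gives `κ_L'(1) = a ^ L`, and the chain rule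
for second derivatives gives `κ_{L+1}''(1) = b a ^ (2L) + a κ_L''(1)`. Hence `1 / ξ_L` satisfies
the affine recursion `1 / ξ_{L+1} = b a⁻² + a⁻¹ (1 / ξ_L)`, so `1 / ξ_L = b a⁻² ∑_{i<L} a⁻ⁱ`:
a geometric series that diverges when `a ≤ 1` and sums to `b / (a (a - 1))` when `a > 1`.
-/

protected theorem ContDiff.iterate {𝕜 E : Type*} [NontriviallyNormedField 𝕜]
    [NormedAddCommGroup E] [NormedSpace 𝕜 E] {n : WithTop ℕ∞} {f : E → E}
    (hf : ContDiff 𝕜 n f) (m : ℕ) : ContDiff 𝕜 n f^[m] := by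
  induction m with
  | zero => exact contDiff_id
  | succ m ih => rw [Function.iterate_succ']; exact hf.comp ih

section DerivIterate

variable {𝕜 : Type*} [NontriviallyNormedField 𝕜] {f g : 𝕜 → 𝕜} {x : 𝕜}

theorem deriv_deriv_comp (hf : ContDiff 𝕜 2 f) (hg : ContDiff 𝕜 2 g) :
    deriv (deriv (f ∘ g)) x =
      deriv (deriv f) (g x) * deriv g x ^ 2 + deriv f (g x) * deriv (deriv g) x := by
  have hderiv : deriv (f ∘ g) = fun y => deriv f (g y) * deriv g y := funext fun y =>
    deriv_comp y (hf.differentiable two_ne_zero _) (hg.differentiable two_ne_zero y)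
  have hgx := hg.differentiable two_ne_zero x
  have hf'gx := hf.differentiable_deriv_two (g x)
  have hf'g : DifferentiableAt 𝕜 (fun y => deriv f (g y)) x := hf'gx.comp x hgx
  have hchain : deriv (fun y => deriv f (g y)) x = deriv (deriv f) (g x) * deriv g x :=
    deriv_comp x hf'gx hgx
  rw [hderiv, deriv_fun_mul hf'g (hg.differentiable_deriv_two x), hchain]
  ring

theorem deriv_iterate_of_isFixedPt_s15 (hf : DifferentiableAt 𝕜 f x) (hx : Function.IsFixedPt f x)
    (n : ℕ) :
    deriv f^[n] x = deriv f x ^ n :=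
  (HasDerivAt.iterate x hf.hasDerivAt hx n).deriv

theorem deriv_deriv_iterate_succ_of_isFixedPt (hf : ContDiff 𝕜 2 f) (hx : Function.IsFixedPt f x)
    (n : ℕ) :
    deriv (deriv f^[n + 1]) x =
      deriv (deriv f) x * deriv f x ^ (2 * n) + deriv f x * deriv (deriv f^[n]) x := by
  rw [Function.iterate_succ', deriv_deriv_comp hf (hf.iterate n), Function.iterate_fixed hx,
    deriv_iterate_of_isFixedPt_s15 (hf.differentiable two_ne_zero x) hx, pow_mul']

end DerivIterate

theorem eq_mul_geom_sum_of_eq_add_mul {R : Type*} [CommSemiring R] {u : ℕ → R} {k c : R}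
    (h0 : u 0 = 0) (hsucc : ∀ n, u (n + 1) = k + c * u n) (n : ℕ) :
    u n = k * ∑ i ∈ range n, c ^ i := by
  induction n with
  | zero => simp [h0]
  | succ n ih =>
    rw [hsucc, ih, sum_range_succ', mul_add, pow_zero, mul_one, add_comm, mul_left_comm, mul_sum]
    simp only [pow_succ']

theorem tendsto_geom_sum_atTop_of_one_le {c : ℝ} (hc : 1 ≤ c) :
    Tendsto (fun n => ∑ i ∈ range n, c ^ i) atTop atTop := by
  refine tendsto_atTop_mono (fun n => ?_) tendsto_natCast_atTop_atTop
  simpa using card_nsmul_le_sum (range n) (c ^ ·) 1 fun i _ => one_le_pow₀ hc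

theorem inv_xiL_succ {κ : ℝ → ℝ} (hκ : ContDiff ℝ 2 κ) (hfix : κ 1 = 1) (ha : deriv κ 1 ≠ 0)
    (L : ℕ) :
    (xiL κ (L + 1))⁻¹ =
      deriv (deriv κ) 1 * (deriv κ 1)⁻¹ ^ 2 + (deriv κ 1)⁻¹ * (xiL κ L)⁻¹ := by
  have hκ1 := hκ.differentiable two_ne_zero 1
  simp only [xiL, inv_div, deriv_iterate_of_isFixedPt_s15 hκ1 hfix,
    deriv_deriv_iterate_succ_of_isFixedPt hκ hfix]
  field_simp
  ring

-- At `L = 0` both sides vanish: `xiL κ 0 = 1 / 0`.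
theorem inv_xiL_eq_geom_sum {κ : ℝ → ℝ} (hκ : ContDiff ℝ 2 κ) (hfix : κ 1 = 1)
    (ha : deriv κ 1 ≠ 0) (L : ℕ) :
    (xiL κ L)⁻¹ =
      deriv (deriv κ) 1 * (deriv κ 1)⁻¹ ^ 2 * ∑ i ∈ range L, (deriv κ 1)⁻¹ ^ i :=
  eq_mul_geom_sum_of_eq_add_mul (u := fun L => (xiL κ L)⁻¹) (by simp [xiL])
    (inv_xiL_succ hκ hfix ha) L

/-- Asymptotics of `ξ_L`: (i) if `κ'(1) ≤ 1` then `ξ_L → 0`;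
(ii) if `κ'(1) > 1` then `ξ_L → κ'(1)(κ'(1)−1)/κ''(1)`. -/
theorem statement15 (κ : ℝ → ℝ) (hκ : ContDiff ℝ 2 κ) (hfix : κ 1 = 1)
    (h1 : 0 < deriv κ 1) (h2 : 0 < deriv (deriv κ) 1) :
    (deriv κ 1 ≤ 1 → Tendsto (fun L : ℕ => xiL κ L) atTop (nhds 0)) ∧
    (1 < deriv κ 1 → Tendsto (fun L : ℕ => xiL κ L) atTop
      (nhds (deriv κ 1 * (deriv κ 1 - 1) / deriv (deriv κ) 1))) := by
  set a := deriv κ 1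
  set b := deriv (deriv κ) 1
  have hxi : ∀ L, xiL κ L = (b * a⁻¹ ^ 2 * ∑ i ∈ range L, a⁻¹ ^ i)⁻¹ := fun L => by
    rw [← inv_xiL_eq_geom_sum hκ hfix h1.ne', inv_inv]
  simp_rw [hxi]
  constructor
  · intro ha
    exact ((tendsto_geom_sum_atTop_of_one_le (one_le_inv₀ h1 |>.2 ha)).const_mul_atTop
      (by positivity)).inv_tendsto_atTop
  · intro ha
    have hc : a⁻¹ < 1 := inv_lt_one_of_one_lt₀ ha
    have hsum := (hasSum_geometric_of_lt_one (by positivity) hc).tendsto_sum_nat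
    convert (hsum.const_mul (b * a⁻¹ ^ 2)).inv₀ (by
      have : 0 < 1 - a⁻¹ := by linarith
      positivity) using 2
    have : a - 1 ≠ 0 := by linarith
    field_simp
end
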